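/- There exists a partial order on ℕ whose coded set is c.e. and which is not isomorphic to any partial order on ℕ whose coded set is computable. -/

import Mathlib

namespace CEOrders

/-- The coded set of a binary relation on ℕ, via the pairing function `Nat.pair`. -/
def codedSet (R : ℕ → ℕ → Prop) : Set ℕ := {n | R n.unpair.1 n.unpair.2}

/-- A set of naturals is c.e. (computably enumerable). -/
def SetCE (A : Set ℕ) : Prop := REPred (· ∈ A)

/-- A set of naturals is co-c.e. -/
def SetCoCE (A : Set ℕ) : Prop := REPred (· ∉ A)

/-- A set of naturals is computable. -/
def SetComputable (A : Set ℕ) : Prop := ComputablePred (· ∈ A)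

/-- A partial order on ℕ: reflexive, antisymmetric, transitive. -/
def PartialOrderRel (R : ℕ → ℕ → Prop) : Prop :=
  (∀ a, R a a) ∧ (∀ a b, R a b → R b a → a = b) ∧ (∀ a b c, R a b → R b c → R a c)

/-- A preorder on ℕ: reflexive, transitive. -/
def PreorderRel (R : ℕ → ℕ → Prop) : Prop :=
  (∀ a, R a a) ∧ (∀ a b c, R a b → R b c → R a c)

/-- A (simple, undirected) graph on ℕ: irreflexive, symmetric. -/
def GraphRel (R : ℕ → ℕ → Prop) : Prop :=
  (∀ a, ¬ R a a) ∧ (∀ a b, R a b → R b a)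

/-- Isomorphism of binary relations on ℕ. -/
def Isomorphic (R Q : ℕ → ℕ → Prop) : Prop :=
  ∃ f : ℕ → ℕ, Function.Bijective f ∧ ∀ a b, R a b ↔ Q (f a) (f b)

/-- A chain for a relation: any two elements comparable. -/
def ChainFor (R : ℕ → ℕ → Prop) (C : Set ℕ) : Prop :=
  ∀ a ∈ C, ∀ b ∈ C, R a b ∨ R b a

/-- An antichain for a relation: any two distinct elements incomparable. -/
def AntichainFor (R : ℕ → ℕ → Prop) (C : Set ℕ) : Prop :=
  ∀ a ∈ C, ∀ b ∈ C, a ≠ b → ¬ R a b ∧ ¬ R b a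

/-- Partial functions computable relative to an oracle `g`. -/
inductive RecursiveIn (g : ℕ →. ℕ) : (ℕ →. ℕ) → Prop
  | zero : RecursiveIn g (pure 0)
  | succ : RecursiveIn g Nat.succ
  | left : RecursiveIn g ↑fun n : ℕ => n.unpair.1
  | right : RecursiveIn g ↑fun n : ℕ => n.unpair.2
  | oracle : RecursiveIn g g
  | pair {f h} : RecursiveIn g f → RecursiveIn g h →
      RecursiveIn g fun n => Nat.pair <$> f n <*> h n
  | comp {f h} : RecursiveIn g f → RecursiveIn g h →
      RecursiveIn g fun n => h n >>= f
  | prec {f h} : RecursiveIn g f → RecursiveIn g h →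
      RecursiveIn g (Nat.unpaired fun a n =>
        n.rec (f a) fun y IH => do let i ← IH; h (Nat.pair a (Nat.pair y i)))
  | rfind {f} : RecursiveIn g f →
      RecursiveIn g fun a => Nat.rfind fun n => (fun m => m = 0) <$> f (Nat.pair a n)

open Classical in
/-- The characteristic (partial) function of a set of naturals. -/
noncomputable def charFun (A : Set ℕ) : ℕ →. ℕ :=
  fun n => Part.some (if n ∈ A then 1 else 0)

/-- Turing reducibility between sets of naturals. -/
def TuringLE (A B : Set ℕ) : Prop := RecursiveIn (charFun B) (charFun A)

/-- Turing equivalence between sets of naturals. -/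
def TuringEquiv (A B : Set ℕ) : Prop := TuringLE A B ∧ TuringLE B A

/-- The halting set ∅'. -/
def HaltingSet : Set ℕ :=
  {n | ((Denumerable.ofNat Nat.Partrec.Code n).eval n).Dom}

/-- A relation on ℕ is automorphically nontrivial. -/
def AutNontrivial (R : ℕ → ℕ → Prop) : Prop :=
  ¬ ∃ F : Finset ℕ, ∀ f : ℕ → ℕ, Function.Bijective f → (∀ x ∈ F, f x = x) →
      ∀ a b, R a b ↔ R (f a) (f b)

end CEOrders

/-!
The partial order is a disjoint union of finite gadgets. Gadget `n` is a fence of length `2n + 3`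
whose two ends are told apart by the number of extra points below them; below the end `n + 1`
hang two points, which are comparable iff the `n`-th program halts on input `0`. The order is
c.e. because halting is.

Let `Q` be a computable copy. An injective map of the bare gadget `n` (without the coding edge)
into the order preserving its relations lands in a single gadget `m`; counting points gives
`n ≤ m`, and walking along the fence from the end with four lower points shows `m = n` and that
the two tail points are mapped onto themselves, possibly swapped. Such configurations in `Q` can
be found by unbounded search, and comparing their two tail points decides halting. Hence the
complement of the halting set would be c.e., which it is not.
-/

section Computability

variable {α β : Type*} [Primcodable α] [Primcodable β]

theorem ComputablePred.comp {p : β → Prop} {f : α → β} (hp : ComputablePred p)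
    (hf : Computable f) : ComputablePred fun a => p (f a) := by
  classical
  exact (hp.decide.comp hf).computablePred

theorem ComputablePred.and {p q : α → Prop} (hp : ComputablePred p) (hq : ComputablePred q) :
    ComputablePred fun a => p a ∧ q a := by
  classical
  exact ((Primrec.and.to_comp.comp hp.decide hq.decide).of_eq fun a => by simp).computablePred

theorem ComputablePred.or {p q : α → Prop} (hp : ComputablePred p) (hq : ComputablePred q) :
    ComputablePred fun a => p a ∨ q a := by
  classical
  exact ((Primrec.or.to_comp.comp hp.decide hq.decide).of_eq fun a => by simp).computablePred

theorem ComputablePred.imp {p q : α → Prop} (hp : ComputablePred p) (hq : ComputablePred q) :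
    ComputablePred fun a => p a → q a :=
  (hp.not.or hq).of_eq fun _ => imp_iff_not_or.symm

theorem ComputablePred.forall_lt {p : α → ℕ → Prop}
    (hp : ComputablePred fun x : α × ℕ => p x.1 x.2) {f : α → ℕ} (hf : Computable f) :
    ComputablePred fun a => ∀ k < f a, p a k := by
  classical
  have hrec : Computable fun a =>
      Nat.rec (motive := fun _ => Bool) true (fun k acc => acc && decide (p a k)) (f a) :=
    Computable.nat_rec hf (Computable.const true)
      (Primrec.and.to_comp.comp (Computable.snd.comp Computable.snd)
        (hp.decide.comp (Computable.fst.pair (Computable.fst.comp Computable.snd)))).to₂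
  refine (hrec.of_eq fun a => ?_).computablePred
  induction f a with
  | zero => simp
  | succ k ih => simp only [ih, Nat.forall_lt_succ_right, Bool.decide_and]

theorem REPred.comp {p : β → Prop} {f : α → β} (hp : REPred p) (hf : Computable f) :
    REPred fun a => p (f a) :=
  Partrec.comp hp hf

theorem REPred.exists {p : α → β → Prop} (hp : ComputablePred fun x : α × β => p x.1 x.2) :
    REPred fun a => ∃ b, p a b := by
  classical
  have hq : Computable fun x : α × ℕ =>
      ((Encodable.decode (α := β) x.2).map fun b => decide (p x.1 b)).getD false :=
    Computable.option_getD (Computable.option_map (Computable.decode.comp Computable.snd)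
      (hp.decide.comp ((Computable.fst.comp Computable.fst).pair Computable.snd)).to₂)
      (Computable.const false)
  refine (Partrec.rfind hq.partrec.to₂).dom_re.of_eq fun a => Nat.rfind_dom.trans ?_
  simp only [PFun.coe_val, Part.mem_some_iff, Part.some_dom, implies_true, and_true]
  constructor
  · rintro ⟨k, hk⟩
    cases h : Encodable.decode (α := β) k with
    | none => simp [h] at hk
    | some b => exact ⟨b, by simpa [h] using hk⟩
  · rintro ⟨b, hb⟩
    exact ⟨Encodable.encode b, by simpa using hb⟩

end Computability

namespace CEOrders

open Nat.Partrec (Code)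

/-- `Nat.pair n x` is position `x` of gadget `n`. Positions `0, …, n + 1` are maximal and
`n + 2 + k` lies below `k` and `k + 1`; the end `0` has the three further lower points
`2n + 3, 2n + 4, 2n + 5` and the end `n + 1` the two lower points `2n + 6, 2n + 7`. -/
def fenceLT (n x y : ℕ) : Prop :=
  (n + 2 ≤ x ∧ x ≤ 2 * n + 2 ∧ (x = y + n + 2 ∨ x = y + n + 1)) ∨
  (2 * n + 3 ≤ x ∧ x ≤ 2 * n + 5 ∧ y = 0) ∨
  ((x = 2 * n + 6 ∨ x = 2 * n + 7) ∧ y = n + 1)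

def gadgetLT (b : Prop) (n x y : ℕ) : Prop :=
  fenceLT n x y ∨ (x = 2 * n + 7 ∧ y = 2 * n + 6 ∧ b)

def gadgetOrder (K : ℕ → Prop) (a b : ℕ) : Prop :=
  a = b ∨ (a.unpair.1 = b.unpair.1 ∧ gadgetLT (K a.unpair.1) a.unpair.1 a.unpair.2 b.unpair.2)

theorem gadgetLT.lt {b : Prop} {n x y : ℕ} (h : gadgetLT b n x y) : y < x ∧ x < 2 * n + 8 := by
  unfold gadgetLT fenceLT at h; omega

theorem fenceLT.lt {n x y : ℕ} (h : fenceLT n x y) : y < x ∧ x < 2 * n + 8 :=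
  gadgetLT.lt (b := False) (Or.inl h)

theorem gadgetLT.trans {b : Prop} {n x y z : ℕ} (hxy : gadgetLT b n x y)
    (hyz : gadgetLT b n y z) : gadgetLT b n x z := by
  unfold gadgetLT fenceLT at *; omega

theorem gadgetLT.mono {b c : Prop} {n x y : ℕ} (h : gadgetLT b n x y) (hbc : b → c) :
    gadgetLT c n x y :=
  h.imp_right fun ⟨hx, hy, hb⟩ => ⟨hx, hy, hbc hb⟩

theorem gadgetOrder_partialOrder (K : ℕ → Prop) : PartialOrderRel (gadgetOrder K) := by
  refine ⟨fun a => Or.inl rfl, ?_, ?_⟩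
  · rintro a b (rfl | ⟨-, hab⟩) (hba | ⟨-, hba⟩)
    · rfl
    · rfl
    · exact hba.symm
    · exact absurd hab.lt.1 (lt_asymm hba.lt.1)
  · rintro a b c (rfl | ⟨hab, hab'⟩) (rfl | ⟨hbc, hbc'⟩)
    · exact Or.inl rfl
    · exact Or.inr ⟨hbc, hbc'⟩
    · exact Or.inr ⟨hab, hab'⟩
    · rw [← hab] at hbc'
      exact Or.inr ⟨hab.trans hbc, hab'.trans hbc'⟩

theorem gadgetOrder_pair_pair {K : ℕ → Prop} {n x y : ℕ} :
    gadgetOrder K (Nat.pair n x) (Nat.pair n y) ↔ x = y ∨ gadgetLT (K n) n x y := by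
  simp [gadgetOrder]

theorem gadgetOrder_exists_iff {K : ℕ → ℕ → Prop} {a b : ℕ} :
    gadgetOrder (fun n => ∃ s, K s n) a b ↔ ∃ s, gadgetOrder (K s) a b := by
  simp [gadgetOrder, gadgetLT, exists_or, exists_and_left]

theorem exists_fenceLT {n x : ℕ} (hx : x < 2 * n + 8) : ∃ y, fenceLT n x y ∨ fenceLT n y x := by
  refine ⟨if x = 0 then n + 2 else if x < n + 2 then x + n + 1 else if x ≤ 2 * n + 2 then
    x - (n + 2) else if x ≤ 2 * n + 5 then 0 else n + 1, ?_⟩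
  unfold fenceLT
  split_ifs <;> omega

theorem fenceLT_connected {n : ℕ} {c : ℕ → ℕ} (hc : ∀ i j, fenceLT n i j → c i = c j) :
    ∀ i < 2 * n + 8, c i = c 0 := by
  have tops : ∀ k ≤ n + 1, c k = c 0 := by
    intro k hk
    induction k with
    | zero => rfl
    | succ k ih =>
      rw [← hc (n + 2 + k) (k + 1) (by unfold fenceLT; omega),
        hc (n + 2 + k) k (by unfold fenceLT; omega), ih (by omega)]
  intro i hi
  obtain ⟨j, hj, rfl | hij⟩ : ∃ j ≤ n + 1, i = j ∨ fenceLT n i j :=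
    ⟨if i ≤ n + 1 then i else if i ≤ 2 * n + 2 then i - (n + 2) else if i ≤ 2 * n + 5 then 0
      else n + 1, by unfold fenceLT; split_ifs <;> omega⟩
  · exact tops i hj
  · rw [hc i j hij, tops j hj]

theorem eq_zero_of_four_lt {m y x₁ x₂ x₃ x₄ : ℕ} (h₁ : gadgetLT True m x₁ y)
    (h₂ : gadgetLT True m x₂ y) (h₃ : gadgetLT True m x₃ y) (h₄ : gadgetLT True m x₄ y)
    (h₁₂ : x₁ ≠ x₂) (h₁₃ : x₁ ≠ x₃) (h₁₄ : x₁ ≠ x₄) (h₂₃ : x₂ ≠ x₃) (h₂₄ : x₂ ≠ x₄)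
    (h₃₄ : x₃ ≠ x₄) : y = 0 := by
  by_contra hy
  have below : ∀ x, gadgetLT True m x y → (y ≤ m ∧ (x = y + m + 1 ∨ x = y + m + 2)) ∨
      (y = m + 1 ∧ (x = 2 * m + 2 ∨ x = 2 * m + 6 ∨ x = 2 * m + 7)) ∨
      (y = 2 * m + 6 ∧ x = 2 * m + 7) := by
    intro x hx; unfold gadgetLT fenceLT at hx; omega
  have := below x₁ h₁; have := below x₂ h₂; have := below x₃ h₃; have := below x₄ h₄
  omega

section FenceEmbedding

variable {n m : ℕ} {σ : ℕ → ℕ}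

theorem le_of_fence_embedding (hinj : Set.InjOn σ (Set.Iio (2 * n + 8)))
    (hσ : ∀ i j, fenceLT n i j → gadgetLT True m (σ i) (σ j)) : n ≤ m := by
  have hmaps : ∀ i ∈ Finset.range (2 * n + 8), σ i ∈ Finset.range (2 * m + 8) := by
    intro i hi
    obtain ⟨j, hij | hji⟩ := exists_fenceLT (Finset.mem_range.1 hi)
    · exact Finset.mem_range.2 (hσ i j hij).lt.2
    · have := (hσ j i hji).lt
      exact Finset.mem_range.2 (by omega)
  have := Finset.card_le_card_of_injOn σ hmaps
    fun i hi j hj => hinj (Finset.mem_range.1 hi) (Finset.mem_range.1 hj)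
  simp only [Finset.card_range] at this
  omega

theorem fence_embedding_apply_of_le (hinj : Set.InjOn σ (Set.Iio (2 * n + 8)))
    (hσ : ∀ i j, fenceLT n i j → gadgetLT True m (σ i) (σ j)) (k : ℕ) (hk : k ≤ n) :
    σ k = k ∧ σ (n + 2 + k) = m + 2 + k := by
  have hnm := le_of_fence_embedding hinj hσ
  have hne : ∀ i j, i < 2 * n + 8 → j < 2 * n + 8 → i ≠ j → σ i ≠ σ j :=
    fun i j hi hj => hinj.ne hi hj
  induction k with
  | zero =>
    show σ 0 = 0 ∧ σ (n + 2) = m + 2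
    have h₀ : σ 0 = 0 := eq_zero_of_four_lt
      (hσ (n + 2) 0 (by unfold fenceLT; omega)) (hσ (2 * n + 3) 0 (by unfold fenceLT; omega))
      (hσ (2 * n + 4) 0 (by unfold fenceLT; omega)) (hσ (2 * n + 5) 0 (by unfold fenceLT; omega))
      (hne _ _ (by omega) (by omega) (by omega)) (hne _ _ (by omega) (by omega) (by omega))
      (hne _ _ (by omega) (by omega) (by omega)) (hne _ _ (by omega) (by omega) (by omega))
      (hne _ _ (by omega) (by omega) (by omega)) (hne _ _ (by omega) (by omega) (by omega))
    have h₁ := hσ (n + 2) 0 (by unfold fenceLT; omega)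
    have h₂ := hσ (n + 2) 1 (by unfold fenceLT; omega)
    have := hne 0 1 (by omega) (by omega) (by omega)
    simp only [gadgetLT, fenceLT, and_true] at h₁ h₂
    omega
  | succ k ih =>
    obtain ⟨htk, hbk⟩ := ih (by omega)
    have h₁ := hσ (n + 2 + k) (k + 1) (by unfold fenceLT; omega)
    have h₂ := hσ (n + 2 + (k + 1)) (k + 1) (by unfold fenceLT; omega)
    have := hne k (k + 1) (by omega) (by omega) (by omega)
    have := hne (n + 2 + k) (n + 2 + (k + 1)) (by omega) (by omega) (by omega)
    simp only [gadgetLT, fenceLT, and_true] at h₁ h₂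
    omega

theorem fence_embedding_tail (hinj : Set.InjOn σ (Set.Iio (2 * n + 8)))
    (hσ : ∀ i j, fenceLT n i j → gadgetLT True m (σ i) (σ j)) : n = m ∧
    (σ (2 * n + 6) = 2 * n + 6 ∧ σ (2 * n + 7) = 2 * n + 7 ∨
      σ (2 * n + 6) = 2 * n + 7 ∧ σ (2 * n + 7) = 2 * n + 6) := by
  have hnm := le_of_fence_embedding hinj hσ
  obtain ⟨htn, hbn⟩ := fence_embedding_apply_of_le hinj hσ n le_rfl
  have hne : ∀ i j, i < 2 * n + 8 → j < 2 * n + 8 → i ≠ j → σ i ≠ σ j :=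
    fun i j hi hj => hinj.ne hi hj
  have h₁ := hσ (n + 2 + n) (n + 1) (by unfold fenceLT; omega)
  have h₂ := hσ (2 * n + 6) (n + 1) (by unfold fenceLT; omega)
  have h₃ := hσ (2 * n + 7) (n + 1) (by unfold fenceLT; omega)
  have := hne n (n + 1) (by omega) (by omega) (by omega)
  have := hne (n + 2 + n) (2 * n + 6) (by omega) (by omega) (by omega)
  have := hne (n + 2 + n) (2 * n + 7) (by omega) (by omega) (by omega)
  have := hne (2 * n + 6) (2 * n + 7) (by omega) (by omega) (by omega)
  simp only [gadgetLT, fenceLT, and_true] at h₁ h₂ h₃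
  omega

end FenceEmbedding

theorem gadgetOrder_tail_iff {K : ℕ → Prop} {n : ℕ} :
    gadgetOrder K (Nat.pair n (2 * n + 7)) (Nat.pair n (2 * n + 6)) ↔ K n := by
  rw [gadgetOrder_pair_pair]
  constructor
  · rintro (h | h | ⟨-, -, hK⟩)
    · omega
    · unfold fenceLT at h; omega
    · exact hK
  · exact fun hK => Or.inr (Or.inr ⟨rfl, rfl, hK⟩)

theorem not_gadgetOrder_tail {K : ℕ → Prop} {n : ℕ} :
    ¬gadgetOrder K (Nat.pair n (2 * n + 6)) (Nat.pair n (2 * n + 7)) := by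
  rw [gadgetOrder_pair_pair]
  rintro (h | h)
  · omega
  · exact absurd h.lt.1 (by omega)

def IsFenceCopy (R : ℕ → ℕ → Prop) (n : ℕ) (v : ℕ → ℕ) : Prop :=
  Set.InjOn v (Set.Iio (2 * n + 8)) ∧ ∀ i j, fenceLT n i j → R (v i) (v j)

def TailComparable (R : ℕ → ℕ → Prop) (n : ℕ) (v : ℕ → ℕ) : Prop :=
  R (v (2 * n + 7)) (v (2 * n + 6)) ∨ R (v (2 * n + 6)) (v (2 * n + 7))

theorem IsFenceCopy.tail_eq_or_swap {K : ℕ → Prop} {n : ℕ} {ρ : ℕ → ℕ}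
    (h : IsFenceCopy (gadgetOrder K) n ρ) :
    ρ (2 * n + 6) = Nat.pair n (2 * n + 6) ∧ ρ (2 * n + 7) = Nat.pair n (2 * n + 7) ∨
      ρ (2 * n + 6) = Nat.pair n (2 * n + 7) ∧ ρ (2 * n + 7) = Nat.pair n (2 * n + 6) := by
  obtain ⟨hinj, hρ⟩ := h
  have edge : ∀ i j, fenceLT n i j → (ρ i).unpair.1 = (ρ j).unpair.1 ∧
      gadgetLT True (ρ i).unpair.1 (ρ i).unpair.2 (ρ j).unpair.2 := by
    intro i j hij
    have hb := hij.lt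
    rcases hρ i j hij with heq | ⟨hc, hlt⟩
    · exact absurd heq (hinj.ne (Set.mem_Iio.2 hb.2) (Set.mem_Iio.2 (by omega)) (by omega))
    · exact ⟨hc, hlt.mono fun _ => trivial⟩
  have hcomp := fenceLT_connected fun i j hij => (edge i j hij).1
  generalize (ρ 0).unpair.1 = m at hcomp
  have hρσ : ∀ i < 2 * n + 8, ρ i = Nat.pair m (ρ i).unpair.2 := fun i hi => by
    rw [← hcomp i hi, Nat.pair_unpair]
  have hinjσ : Set.InjOn (fun i => (ρ i).unpair.2) (Set.Iio (2 * n + 8)) :=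
    fun i hi j hj hij => hinj hi hj (by rw [hρσ i hi, hρσ j hj]; exact congrArg _ hij)
  have hσ : ∀ i j, fenceLT n i j → gadgetLT True m (ρ i).unpair.2 (ρ j).unpair.2 :=
    fun i j hij => hcomp i hij.lt.2 ▸ (edge i j hij).2
  obtain ⟨rfl, htail⟩ := fence_embedding_tail hinjσ hσ
  rw [hρσ (2 * n + 6) (by omega), hρσ (2 * n + 7) (by omega)]
  rcases htail with ⟨h6, h7⟩ | ⟨h6, h7⟩
  · exact Or.inl ⟨by rw [h6], by rw [h7]⟩
  · exact Or.inr ⟨by rw [h6], by rw [h7]⟩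

theorem IsFenceCopy.tailComparable_gadgetOrder_iff {K : ℕ → Prop} {n : ℕ} {ρ : ℕ → ℕ}
    (h : IsFenceCopy (gadgetOrder K) n ρ) : TailComparable (gadgetOrder K) n ρ ↔ K n := by
  rcases h.tail_eq_or_swap with ⟨h6, h7⟩ | ⟨h6, h7⟩ <;>
  simp only [TailComparable, h6, h7, gadgetOrder_tail_iff, not_gadgetOrder_tail, or_false,
    false_or]

theorem Isomorphic.symm {R Q : ℕ → ℕ → Prop} (h : Isomorphic R Q) : Isomorphic Q R := by
  obtain ⟨f, hf, hRQ⟩ := h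
  obtain ⟨g, hgf, hfg⟩ := Function.bijective_iff_has_inverse.1 hf
  refine ⟨g, ⟨hfg.injective, hgf.surjective⟩, fun a b => ?_⟩
  rw [hRQ, hfg a, hfg b]

section Transport

variable {R Q : ℕ → ℕ → Prop} {f : ℕ → ℕ} {n : ℕ} {v : ℕ → ℕ}

theorem IsFenceCopy.map (hf : Function.Injective f) (hRQ : ∀ a b, R a b ↔ Q (f a) (f b))
    (h : IsFenceCopy R n v) : IsFenceCopy Q n (f ∘ v) :=
  ⟨hf.comp_injOn h.1, fun i j hij => (hRQ _ _).1 (h.2 i j hij)⟩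

theorem tailComparable_comp (hRQ : ∀ a b, R a b ↔ Q (f a) (f b)) :
    TailComparable Q n (f ∘ v) ↔ TailComparable R n v := by
  simp only [TailComparable, Function.comp_apply, hRQ]

theorem IsFenceCopy.congr {w : ℕ → ℕ} (h : IsFenceCopy R n v)
    (hvw : ∀ i < 2 * n + 8, v i = w i) : IsFenceCopy R n w := by
  refine ⟨h.1.congr fun i hi => hvw i hi, fun i j hij => ?_⟩
  have := hij.lt
  rw [← hvw i this.2, ← hvw j (by omega)]
  exact h.2 i j hij

end Transport

theorem isFenceCopy_pair (K : ℕ → Prop) (n : ℕ) : IsFenceCopy (gadgetOrder K) n (Nat.pair n) :=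
  ⟨fun _ _ _ _ h => (Nat.pair_eq_pair.1 h).2,
    fun _ _ hij => gadgetOrder_pair_pair.2 (Or.inr (Or.inl hij))⟩

theorem not_iff_exists_fenceCopy {K : ℕ → Prop} {Q : ℕ → ℕ → Prop}
    (hiso : Isomorphic (gadgetOrder K) Q) (n : ℕ) :
    ¬K n ↔ ∃ l : List ℕ, IsFenceCopy Q n (l.getD · 0) ∧ ¬TailComparable Q n (l.getD · 0) := by
  have decides : ∀ v, IsFenceCopy Q n v → (TailComparable Q n v ↔ K n) := by
    obtain ⟨g, hg, hQ⟩ := hiso.symm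
    intro v hv
    rw [← tailComparable_comp hQ]
    exact (hv.map hg.1 hQ).tailComparable_gadgetOrder_iff
  obtain ⟨f, hf, hPQ⟩ := hiso
  have hcopy : IsFenceCopy Q n (((List.range (2 * n + 8)).map (f ∘ Nat.pair n)).getD · 0) :=
    ((isFenceCopy_pair K n).map hf.1 hPQ).congr fun i hi => by simp [hi]
  constructor
  · exact fun hK => ⟨_, hcopy, fun h => hK ((decides _ hcopy).1 h)⟩
  · rintro ⟨l, hl, hT⟩ hK
    exact hT ((decides _ hl).2 hK)

theorem isFenceCopy_iff_forall_lt {R : ℕ → ℕ → Prop} {n : ℕ} {v : ℕ → ℕ} :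
    IsFenceCopy R n v ↔ ∀ i < 2 * n + 8, ∀ j < 2 * n + 8,
      (v i = v j → i = j) ∧ (fenceLT n i j → R (v i) (v j)) := by
  constructor
  · exact fun h i hi j hj => ⟨fun hij => h.1 hi hj hij, h.2 i j⟩
  · intro h
    refine ⟨fun i hi j hj hij => (h i hi j hj).1 hij, fun i j hij => ?_⟩
    have := hij.lt
    exact (h i this.2 j (by omega)).2 hij

theorem primrecPred_fenceLT : PrimrecPred fun x : ℕ × ℕ × ℕ => fenceLT x.1 x.2.1 x.2.2 := by
  have hn : Primrec fun x : ℕ × ℕ × ℕ => x.1 := Primrec.fst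
  have hx : Primrec fun x : ℕ × ℕ × ℕ => x.2.1 := Primrec.fst.comp Primrec.snd
  have hy : Primrec fun x : ℕ × ℕ × ℕ => x.2.2 := Primrec.snd.comp Primrec.snd
  have lin : ∀ a c : ℕ, Primrec fun x : ℕ × ℕ × ℕ => a * x.1 + c := fun a c =>
    Primrec.nat_add.comp (Primrec.nat_mul.comp (Primrec.const a) hn) (Primrec.const c)
  have shift : ∀ c : ℕ, Primrec fun x : ℕ × ℕ × ℕ => x.2.2 + (1 * x.1 + c) := fun c =>
    Primrec.nat_add.comp hy (lin 1 c)
  refine (((Primrec.nat_le.comp (lin 1 2) hx).and ((Primrec.nat_le.comp hx (lin 2 2)).and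
    ((Primrec.eq.comp hx (shift 2)).or (Primrec.eq.comp hx (shift 1))))).or
    (((Primrec.nat_le.comp (lin 2 3) hx).and ((Primrec.nat_le.comp hx (lin 2 5)).and
      (Primrec.eq.comp hy (Primrec.const 0)))).or
    (((Primrec.eq.comp hx (lin 2 6)).or (Primrec.eq.comp hx (lin 2 7))).and
      (Primrec.eq.comp hy (lin 1 1))))).of_eq fun x => ?_
  unfold fenceLT
  omega

theorem primrecPred_gadgetOrder {β : Type*} [Primcodable β] {K : β → ℕ → Prop}
    (hK : PrimrecRel K) : PrimrecPred fun x : β × ℕ × ℕ => gadgetOrder (K x.1) x.2.1 x.2.2 := by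
  have ha : Primrec fun x : β × ℕ × ℕ => x.2.1 := Primrec.fst.comp Primrec.snd
  have hb : Primrec fun x : β × ℕ × ℕ => x.2.2 := Primrec.snd.comp Primrec.snd
  have hn := Primrec.fst.comp (Primrec.unpair.comp ha)
  have hx := Primrec.snd.comp (Primrec.unpair.comp ha)
  have hy := Primrec.snd.comp (Primrec.unpair.comp hb)
  have lin : ∀ c : ℕ, Primrec fun x : β × ℕ × ℕ => 2 * x.2.1.unpair.1 + c := fun c =>
    Primrec.nat_add.comp (Primrec.nat_mul.comp (Primrec.const 2) hn) (Primrec.const c)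
  exact (Primrec.eq.comp ha hb).or
    ((Primrec.eq.comp hn (Primrec.fst.comp (Primrec.unpair.comp hb))).and
      ((primrecPred_fenceLT.comp (hn.pair (hx.pair hy))).or
        ((Primrec.eq.comp hx (lin 7)).and
          ((Primrec.eq.comp hy (lin 6)).and (hK.comp Primrec.fst hn)))))

theorem setCE_codedSet_gadgetOrder {K : ℕ → ℕ → Prop} (hK : PrimrecRel K) :
    SetCE (codedSet (gadgetOrder fun n => ∃ s, K s n)) :=
  (REPred.exists ((primrecPred_gadgetOrder hK).comp
    (Primrec.snd.pair (Primrec.unpair.comp Primrec.fst))).computablePred).of_eq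
    fun _ => gadgetOrder_exists_iff.symm

def Halts (n : ℕ) : Prop := ((Denumerable.ofNat Code n).eval 0).Dom

theorem halts_eq_exists_evaln :
    Halts = fun n => ∃ s, (Code.evaln s (Denumerable.ofNat Code n) 0).isSome := by
  ext n
  rw [Halts, Part.dom_iff_mem]
  simp only [Code.evaln_complete, Option.isSome_iff_exists]
  exact ⟨fun ⟨x, s, hx⟩ => ⟨s, x, hx⟩, fun ⟨s, x, hx⟩ => ⟨x, s, hx⟩⟩

theorem setCE_codedSet_gadgetOrder_halts : SetCE (codedSet (gadgetOrder Halts)) := by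
  rw [halts_eq_exists_evaln]
  exact setCE_codedSet_gadgetOrder (Primrec.eq.comp (Primrec.option_isSome.comp
    (Code.primrec_evaln.comp ((Primrec.fst.pair ((Primrec.ofNat Code).comp Primrec.snd)).pair
      (Primrec.const 0)))) (Primrec.const true))

section Search

variable {Q : ℕ → ℕ → Prop}

theorem computablePred_isFenceCopy (hQ : ComputablePred fun x : ℕ × ℕ => Q x.1 x.2) :
    ComputablePred fun x : ℕ × List ℕ => IsFenceCopy Q x.1 (x.2.getD · 0) := by
  have hx : Primrec fun w : ((ℕ × List ℕ) × ℕ) × ℕ => w.1.1 := Primrec.fst.comp Primrec.fst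
  have hi : Primrec fun w : ((ℕ × List ℕ) × ℕ) × ℕ => w.1.2 := Primrec.snd.comp Primrec.fst
  have hvi := (Primrec.list_getD 0).comp (Primrec.snd.comp hx) hi
  have hvj := (Primrec.list_getD 0).comp (Primrec.snd.comp hx) Primrec.snd
  have hedge := primrecPred_fenceLT.comp ((Primrec.fst.comp hx).pair (hi.pair Primrec.snd))
  have hpair : ComputablePred fun w : ((ℕ × List ℕ) × ℕ) × ℕ =>
      (w.1.1.2.getD w.1.2 0 = w.1.1.2.getD w.2 0 → w.1.2 = w.2) ∧
        (fenceLT w.1.1.1 w.1.2 w.2 → Q (w.1.1.2.getD w.1.2 0) (w.1.1.2.getD w.2 0)) :=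
    ((Primrec.eq.comp hvi hvj).computablePred.imp
      (Primrec.eq.comp hi Primrec.snd).computablePred).and
      (hedge.computablePred.imp (hQ.comp (hvi.pair hvj).to_comp))
  have hbound : Primrec fun x : ℕ × List ℕ => 2 * x.1 + 8 :=
    Primrec.nat_add.comp (Primrec.nat_mul.comp (Primrec.const 2) Primrec.fst) (Primrec.const 8)
  have hrow : ComputablePred fun z : (ℕ × List ℕ) × ℕ => ∀ j < 2 * z.1.1 + 8,
      (z.1.2.getD z.2 0 = z.1.2.getD j 0 → z.2 = j) ∧
        (fenceLT z.1.1 z.2 j → Q (z.1.2.getD z.2 0) (z.1.2.getD j 0)) :=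
    hpair.forall_lt (hbound.comp Primrec.fst).to_comp
  exact (hrow.forall_lt hbound.to_comp).of_eq fun _ => isFenceCopy_iff_forall_lt.symm

theorem computablePred_tailComparable (hQ : ComputablePred fun x : ℕ × ℕ => Q x.1 x.2) :
    ComputablePred fun x : ℕ × List ℕ => TailComparable Q x.1 (x.2.getD · 0) := by
  have hentry : ∀ c : ℕ, Primrec fun x : ℕ × List ℕ => x.2.getD (2 * x.1 + c) 0 := fun c =>
    (Primrec.list_getD 0).comp Primrec.snd (Primrec.nat_add.comp
      (Primrec.nat_mul.comp (Primrec.const 2) Primrec.fst) (Primrec.const c))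
  exact (hQ.comp ((hentry 7).pair (hentry 6)).to_comp).or
    (hQ.comp ((hentry 6).pair (hentry 7)).to_comp)

end Search

theorem rePred_not_of_isomorphic {K : ℕ → Prop} {Q : ℕ → ℕ → Prop}
    (hiso : Isomorphic (gadgetOrder K) Q) (hQ : SetComputable (codedSet Q)) :
    REPred fun n => ¬K n := by
  have hQ' : ComputablePred fun x : ℕ × ℕ => Q x.1 x.2 :=
    (hQ.comp (Primrec₂.natPair.comp Primrec.fst Primrec.snd).to_comp).of_eq
      fun _ => by simp [codedSet]
  exact (REPred.exists ((computablePred_isFenceCopy hQ').and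
    (computablePred_tailComparable hQ').not)).of_eq
    fun n => (not_iff_exists_fenceCopy hiso n).symm

theorem exists_CE_partialOrder_not_iso_computable :
    ∃ P : ℕ → ℕ → Prop, PartialOrderRel P ∧ SetCE (codedSet P) ∧
      ∀ Q : ℕ → ℕ → Prop, PartialOrderRel Q → SetComputable (codedSet Q) → ¬ Isomorphic P Q := by
  refine ⟨gadgetOrder Halts, gadgetOrder_partialOrder Halts, setCE_codedSet_gadgetOrder_halts, ?_⟩
  rintro Q - hQ hiso
  exact ComputablePred.halting_problem_not_re 0 <|
    ((rePred_not_of_isomorphic hiso hQ).comp Computable.encode).of_eq fun c => by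
      simp [Halts]

end CEOrders
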